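/- arXiv:1203.5696 — 5 statements merged into one kernel-verified Lean document; each statement's English description precedes it below -/
import Mathlib

section
/- The integral of the Wendland function over the half-line satisfies ∫_0^∞ φ_{ℓ,k}(r) dr = 2^k Γ(ℓ+1) Γ(k+1) / Γ(ℓ+2k+2). -/
open Real MeasureTheory

/-- The Wendland function φ_{ℓ,k}. -/
noncomputable def wendland (l : ℕ) (k : ℝ) (r : ℝ) : ℝ :=
  if r ≤ 1 then
    (1 / (Real.Gamma k * (2:ℝ) ^ (k - 1))) *
      ∫ s in r..1, s * (1 - s) ^ l * (s ^ 2 - r ^ 2) ^ (k - 1)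
  else 0

/-!
Swapping the order of integration over the triangle `0 < r < s < 1` turns the integral into
`∫₀¹ s (1 - s)^ℓ ∫₀ˢ (s² - r²)^(k-1) dr ds`. Scaling `r = s x` and substituting `x = √u` make the
inner integral `s^(2k-1) B(1/2, k) / 2`, so what remains is the beta integral `B(2k+1, ℓ+1)`;
Legendre's duplication formula then collapses the Gamma factors.
-/

open Set

theorem integral_rpow_mul_one_sub_rpow {a b : ℝ} (ha : 0 < a) (hb : 0 < b) :
    ∫ x in (0:ℝ)..1, x ^ (a - 1) * (1 - x) ^ (b - 1) = Gamma a * Gamma b / Gamma (a + b) := by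
  have hβ : Complex.betaIntegral a b = ↑(∫ x in (0:ℝ)..1, x ^ (a - 1) * (1 - x) ^ (b - 1)) := by
    rw [Complex.betaIntegral, ← intervalIntegral.integral_ofReal]
    refine intervalIntegral.integral_congr fun x hx => ?_
    rw [uIcc_of_le zero_le_one] at hx
    push_cast
    rw [Complex.ofReal_cpow hx.1, Complex.ofReal_cpow (sub_nonneg.2 hx.2)]
    push_cast
    ring
  have := ProbabilityTheory.beta_eq_betaIntegralReal a b ha hb
  rwa [hβ, Complex.ofReal_re, eq_comm] at this

theorem intervalIntegrable_rpow_mul_one_sub_rpow {a b : ℝ} (ha : 0 < a) (hb : 0 < b) :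
    IntervalIntegrable (fun x => x ^ (a - 1) * (1 - x) ^ (b - 1)) volume 0 1 :=
  intervalIntegral.intervalIntegrable_of_integral_ne_zero <| by
    rw [integral_rpow_mul_one_sub_rpow ha hb]
    have := Gamma_pos_of_pos ha
    have := Gamma_pos_of_pos hb
    have := Gamma_pos_of_pos (add_pos ha hb)
    positivity

theorem integral_one_sub_sq_rpow {k : ℝ} (hk : 0 < k) :
    ∫ x in (0:ℝ)..1, (1 - x ^ 2) ^ (k - 1) = √π * Gamma k / (2 * Gamma (k + 1 / 2)) := by
  have hsubst := integral_Icc_deriv_smul_of_deriv_nonneg (f := fun x : ℝ => x ^ 2)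
    (f' := fun x => 2 * x) (g := fun u => u ^ ((1:ℝ) / 2 - 1) * (1 - u) ^ (k - 1))
    (by fun_prop) (fun x _ => by simpa using hasDerivAt_pow 2 x)
    (fun x hx => by linarith [hx.1]) zero_le_one
  have hcancel : ∀ x ∈ Ioc (0:ℝ) 1,
      (2 * x) • ((x ^ 2) ^ ((1:ℝ) / 2 - 1) * (1 - x ^ 2) ^ (k - 1))
        = 2 * (1 - x ^ 2) ^ (k - 1) := by
    intro x hx
    rw [← rpow_natCast, ← rpow_mul hx.1.le, smul_eq_mul, Nat.cast_ofNat,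
      show (2:ℝ) * (1 / 2 - 1) = -1 by norm_num, rpow_neg_one]
    field_simp [hx.1.ne']
  simp only [integral_Icc_eq_integral_Ioc] at hsubst
  rw [setIntegral_congr_fun measurableSet_Ioc hcancel, one_pow, zero_pow two_ne_zero,
    ← intervalIntegral.integral_of_le zero_le_one, ← intervalIntegral.integral_of_le zero_le_one,
    intervalIntegral.integral_const_mul, integral_rpow_mul_one_sub_rpow one_half_pos hk,
    Gamma_one_half_eq, add_comm, eq_div_iff (Gamma_pos_of_pos (by positivity)).ne'] at hsubst
  rw [eq_div_iff (by positivity), ← hsubst]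
  ring

theorem integral_sq_sub_sq_rpow (k : ℝ) {s : ℝ} (hs : 0 < s) :
    ∫ r in (0:ℝ)..s, (s ^ 2 - r ^ 2) ^ (k - 1)
      = s ^ (2 * k - 1) * ∫ x in (0:ℝ)..1, (1 - x ^ 2) ^ (k - 1) := by
  have hscale := intervalIntegral.integral_comp_mul_left
    (fun r => (s ^ 2 - r ^ 2) ^ (k - 1)) hs.ne' (a := 0) (b := 1)
  have hfactor : ∫ x in (0:ℝ)..1, (s ^ 2 - (s * x) ^ 2) ^ (k - 1)
      = (s ^ 2) ^ (k - 1) * ∫ x in (0:ℝ)..1, (1 - x ^ 2) ^ (k - 1) := by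
    rw [← intervalIntegral.integral_const_mul]
    refine intervalIntegral.integral_congr fun x hx => ?_
    rw [uIcc_of_le zero_le_one] at hx
    rw [← mul_rpow (sq_nonneg s) (by nlinarith [hx.1, hx.2])]
    ring_nf
  have hpow : s * (s ^ 2) ^ (k - 1) = s ^ (2 * k - 1) := by
    rw [← rpow_natCast, ← rpow_mul hs.le, mul_comm, ← rpow_add_one hs.ne']
    ring_nf
  rw [mul_zero, mul_one, hfactor, smul_eq_mul, eq_inv_mul_iff_mul_eq₀ hs.ne'] at hscale
  rw [← hscale, ← mul_assoc, hpow]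

theorem intervalIntegrable_sq_sub_sq_rpow {k s : ℝ} (hk : 0 < k) (hs : 0 < s) :
    IntervalIntegrable (fun r => (s ^ 2 - r ^ 2) ^ (k - 1)) volume 0 s :=
  intervalIntegral.intervalIntegrable_of_integral_ne_zero <| by
    rw [integral_sq_sub_sq_rpow k hs, integral_one_sub_sq_rpow hk]
    have := Gamma_pos_of_pos hk
    have := Gamma_pos_of_pos (by positivity : 0 < k + 1 / 2)
    positivity

section Triangle

variable {E : Type*} [NormedAddCommGroup E] [NormedSpace ℝ E] {a b : ℝ}

theorem setIntegral_Ioc_ite_lt (g : ℝ → E) {s : ℝ} (hs : s ∈ Icc a b) :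
    ∫ r in Ioc a b, (if r < s then g r else 0) = ∫ r in a..s, g r := by
  have hset : Ioc a b ∩ Iio s = Ioo a s := by
    ext r; simp only [mem_inter_iff, mem_Ioc, mem_Iio, mem_Ioo]; grind
  simp_rw [← mem_Iio, ← indicator_apply]
  rw [setIntegral_indicator measurableSet_Iio, hset, intervalIntegral.integral_of_le hs.1,
    integral_Ioc_eq_integral_Ioo]

theorem setIntegral_Ioc_ite_gt (g : ℝ → E) {r : ℝ} (hr : r ∈ Icc a b) :
    ∫ s in Ioc a b, (if r < s then g s else 0) = ∫ s in r..b, g s := by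
  have hset : Ioc a b ∩ Ioi r = Ioc r b := by
    ext s; simp only [mem_inter_iff, mem_Ioc, mem_Ioi]; grind
  simp_rw [← mem_Ioi, ← indicator_apply]
  rw [setIntegral_indicator measurableSet_Ioi, hset, intervalIntegral.integral_of_le hr.2]

theorem integrableOn_triangle_of_nonneg {f : ℝ → ℝ → ℝ} (hf : Measurable (Function.uncurry f))
    (hf_nonneg : ∀ r s, a < r → r < s → s ≤ b → 0 ≤ f r s)
    (hf_slice : ∀ s ∈ Ioc a b, IntervalIntegrable (f · s) volume a s)
    (hf_int : IntervalIntegrable (fun s => ∫ r in a..s, f r s) volume a b) :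
    IntegrableOn (fun p : ℝ × ℝ => if p.1 < p.2 then f p.1 p.2 else 0) (Ioc a b ×ˢ Ioc a b) := by
  have hmeas : Measurable fun p : ℝ × ℝ => if p.1 < p.2 then f p.1 p.2 else 0 :=
    Measurable.ite (measurableSet_lt measurable_fst measurable_snd) hf measurable_const
  have hnorm : ∀ s ∈ Ioc a b,
      ∫ r in Ioc a b, ‖if r < s then f r s else 0‖ = ∫ r in a..s, f r s := by
    intro s hs
    rw [← setIntegral_Ioc_ite_lt _ (Ioc_subset_Icc_self hs)]
    refine setIntegral_congr_fun measurableSet_Ioc fun r hr => ?_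
    split_ifs with hrs
    · exact norm_of_nonneg (hf_nonneg r s hr.1 hrs hs.2)
    · exact norm_zero
  rw [IntegrableOn, Measure.volume_eq_prod, ← Measure.prod_restrict,
    integrable_prod_iff' hmeas.aestronglyMeasurable]
  refine ⟨ae_restrict_of_forall_mem measurableSet_Ioc fun s hs => ?_, ?_⟩
  · have hslice : (fun r => if r < s then f r s else 0) = (Iio s).indicator (f · s) := by
      ext r; simp [indicator_apply]
    rw [hslice, integrable_indicator_iff measurableSet_Iio, IntegrableOn,
      Measure.restrict_restrict measurableSet_Iio]
    exact (hf_slice s hs).1.mono_set fun r hr => ⟨hr.2.1, hr.1.le⟩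
  · exact hf_int.1.congr (ae_restrict_of_forall_mem measurableSet_Ioc fun s hs => (hnorm s hs).symm)

theorem intervalIntegral_triangle_swap [CompleteSpace E] {f : ℝ → ℝ → E} (hab : a ≤ b)
    (hf : IntegrableOn (fun p : ℝ × ℝ => if p.1 < p.2 then f p.1 p.2 else 0)
      (Ioc a b ×ˢ Ioc a b)) :
    ∫ r in a..b, ∫ s in r..b, f r s = ∫ s in a..b, ∫ r in a..s, f r s := by
  have hf' : IntegrableOn (Function.uncurry fun r s => if r < s then f r s else 0)
      (uIoc a b ×ˢ uIoc a b) := by rwa [uIoc_of_le hab]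
  calc ∫ r in a..b, ∫ s in r..b, f r s
      = ∫ r in a..b, ∫ s in a..b, (if r < s then f r s else 0) := by
        refine intervalIntegral.integral_congr fun r hr => ?_
        rw [uIcc_of_le hab] at hr
        rw [intervalIntegral.integral_of_le hab, setIntegral_Ioc_ite_gt _ hr]
    _ = ∫ s in a..b, ∫ r in a..b, (if r < s then f r s else 0) :=
        intervalIntegral_intervalIntegral_swap hf'
    _ = ∫ s in a..b, ∫ r in a..s, f r s := by
        refine intervalIntegral.integral_congr fun s hs => ?_
        rw [uIcc_of_le hab] at hs
        rw [intervalIntegral.integral_of_le hab, setIntegral_Ioc_ite_lt _ hs]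

end Triangle

theorem integral_Ioi_wendland (l : ℕ) (k : ℝ) :
    ∫ r in Ioi (0:ℝ), wendland l k r = (1 / (Gamma k * (2:ℝ) ^ (k - 1))) *
      ∫ r in (0:ℝ)..1, ∫ s in r..1, s * (1 - s) ^ l * (s ^ 2 - r ^ 2) ^ (k - 1) := by
  rw [setIntegral_eq_of_subset_of_forall_sdiff_eq_zero (f := wendland l k) measurableSet_Ioi
      Ioc_subset_Ioi_self fun r hr => if_neg fun h => hr.2 ⟨hr.1, h⟩,
    intervalIntegral.integral_of_le zero_le_one, ← integral_const_mul]
  exact setIntegral_congr_fun measurableSet_Ioc fun r hr => if_pos hr.2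

theorem sqrt_pi_mul_Gamma_two_mul_add_one (k : ℝ) :
    √π * Gamma (2 * k + 1) = 2 ^ (2 * k) * Gamma (k + 1 / 2) * Gamma (k + 1) := by
  have h := Gamma_mul_Gamma_add_half (k + 1 / 2)
  rw [show k + 1 / 2 + 1 / 2 = k + 1 by ring, show 2 * (k + 1 / 2) = 2 * k + 1 by ring,
    show 1 - (2 * k + 1) = -(2 * k) by ring, rpow_neg zero_le_two] at h
  rw [mul_assoc, h]
  field_simp

theorem Gamma_wendland_constant {k : ℝ} (hk : 0 < k) (l : ℕ) :
    1 / (Gamma k * 2 ^ (k - 1)) * (√π * Gamma k / (2 * Gamma (k + 1 / 2)) *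
      (Gamma (2 * k + 1) * Gamma ((l:ℝ) + 1) / Gamma (2 * k + 1 + ((l:ℝ) + 1))))
      = 2 ^ k * Gamma ((l:ℝ) + 1) * Gamma (k + 1) / Gamma ((l:ℝ) + 2 * k + 2) := by
  have hpow : (2:ℝ) ^ (2 * k) = 2 * 2 ^ (k - 1) * 2 ^ k := by
    rw [mul_assoc, ← rpow_add zero_lt_two, ← rpow_one_add' zero_le_two (by linarith)]
    ring_nf
  have := Gamma_pos_of_pos hk
  have := Gamma_pos_of_pos (by positivity : 0 < k + 1 / 2)
  calc _ = √π * Gamma (2 * k + 1) * Gamma ((l:ℝ) + 1) /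
        (2 * 2 ^ (k - 1) * Gamma (k + 1 / 2) * Gamma ((l:ℝ) + 2 * k + 2)) := by
        rw [show 2 * k + 1 + ((l:ℝ) + 1) = l + 2 * k + 2 by ring]
        field_simp
    _ = _ := by
        rw [sqrt_pi_mul_Gamma_two_mul_add_one, hpow]
        field_simp

theorem wendland_integral_general (k : ℝ) (hk : 0 < k) (l : ℕ) :
    ∫ r in Set.Ioi (0:ℝ), wendland l k r =
      (2:ℝ) ^ k * Real.Gamma ((l : ℝ) + 1) * Real.Gamma (k + 1) /
        Real.Gamma ((l : ℝ) + 2 * k + 2) := by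
  have hinner : ∀ s ∈ uIoc (0:ℝ) 1, ∫ r in (0:ℝ)..s, s * (1 - s) ^ l * (s ^ 2 - r ^ 2) ^ (k - 1)
      = √π * Gamma k / (2 * Gamma (k + 1 / 2)) *
          (s ^ (2 * k + 1 - 1) * (1 - s) ^ ((l:ℝ) + 1 - 1)) := by
    intro s hs
    rw [uIoc_of_le zero_le_one] at hs
    rw [intervalIntegral.integral_const_mul, integral_sq_sub_sq_rpow k hs.1,
      integral_one_sub_sq_rpow hk, add_sub_cancel_right, add_sub_cancel_right, rpow_natCast,
      ← sub_add_cancel (2 * k) 1, rpow_add_one hs.1.ne', add_sub_cancel_right]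
    ring
  have hintegrable := integrableOn_triangle_of_nonneg (a := 0) (b := 1)
    (f := fun r s => s * (1 - s) ^ l * (s ^ 2 - r ^ 2) ^ (k - 1)) (by fun_prop)
    (fun r s hr hrs hs => mul_nonneg (mul_nonneg (by linarith) (pow_nonneg (by linarith) l))
      (rpow_nonneg (by nlinarith) _))
    (fun s hs => (intervalIntegrable_sq_sub_sq_rpow hk hs.1).const_mul _)
    (((intervalIntegrable_rpow_mul_one_sub_rpow (a := 2 * k + 1) (b := l + 1) (by positivity)
      (by positivity)).const_mul _).congr fun s hs => (hinner s hs).symm)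
  rw [integral_Ioi_wendland, intervalIntegral_triangle_swap zero_le_one hintegrable,
    intervalIntegral.integral_congr_ae (Filter.Eventually.of_forall hinner),
    intervalIntegral.integral_const_mul, integral_rpow_mul_one_sub_rpow (by positivity)
      (by positivity)]
  exact Gamma_wendland_constant hk l

theorem wendland_integral (k : ℝ) (hk : 0 < k) (l : ℕ) (hl : 1 ≤ l) :
    ∫ r in Set.Ioi (0:ℝ), wendland l k r =
      (2:ℝ) ^ k * Real.Gamma ((l : ℝ) + 1) * Real.Gamma (k + 1) /
        Real.Gamma ((l : ℝ) + 2 * k + 2) :=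
  wendland_integral_general k hk l
end

section
/- For 0 ≤ r ≤ 1, the Wendland function satisfies φ_{ℓ,k}(r) = (Γ(ℓ+1)/(2^{ℓ+k} Γ(ℓ+k+1))) (1-r²)^{ℓ+k} · ₂F₁(ℓ/2, (ℓ+1)/2; ℓ+k+1; 1-r²). -/
open Real MeasureTheory

/-- Pochhammer symbol (rising factorial) for real argument. -/
noncomputable def poch (a : ℝ) (n : ℕ) : ℝ := ∏ i ∈ Finset.range n, (a + i)

/-- The Gauss hypergeometric function ₂F₁ as a series. -/
noncomputable def twoF1 (a b c z : ℝ) : ℝ :=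
  ∑' n : ℕ, poch a n * poch b n / poch c n * z ^ n / n.factorial

/-!
Put `x = 1 - s ^ 2`, so that `1 - s = 1 - √(1 - x)`. The power `(1 - √(1 - x)) ^ l` has a power
series in `x` with nonnegative coefficients `l (2m - l - 1)! / (m! (m - l)! 2 ^ (2m - l))`: for
`l = 1` they are `catalan (m - 1) / 2 ^ (2m - 1)`, and the Catalan recursion says that the series
`y` solves `y ^ 2 = 2 y - x`, which also gives `y ^ (l + 2) = 2 y ^ (l + 1) - x y ^ l`.
Integrating term by term (the terms are nonnegative), the substitution
`t = (s ^ 2 - r ^ 2) / (1 - r ^ 2)` turns every term into a Beta integral,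
`∫_r^1 s (1 - s²)^m (s² - r²)^(k-1) ds = (1 - r²)^(k+m) Γ(k) m! / (2 Γ(k+m+1))`.
By the duplication formula `(a)_n (a + 1/2)_n 4^n = (2a)_(2n)`, the coefficient of `x ^ (l + n)`
is `2 ^ (-l) (l/2)_n ((l+1)/2)_n / ((l+1)_n n!)`, and the series becomes the ₂F₁ series.
-/

section

open Finset

@[simp] lemma poch_zero (a : ℝ) : poch a 0 = 1 := prod_range_zero _

lemma poch_succ (a : ℝ) (n : ℕ) : poch a (n + 1) = poch a n * (a + n) := prod_range_succ _ _

lemma poch_pos {a : ℝ} (ha : 0 < a) (n : ℕ) : 0 < poch a n :=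
  prod_pos fun i _ => by positivity

lemma Gamma_mul_poch {a : ℝ} (ha : 0 < a) (n : ℕ) : Gamma a * poch a n = Gamma (a + n) := by
  induction n with
  | zero => simp
  | succ n ih =>
    rw [poch_succ, ← mul_assoc, ih, Nat.cast_succ, ← add_assoc, Gamma_add_one (by positivity)]
    ring

lemma factorial_mul_poch (a n : ℕ) : (a.factorial : ℝ) * poch (a + 1) n = (a + n).factorial := by
  rw [← Gamma_nat_eq_factorial, Gamma_mul_poch (by positivity), ← Gamma_nat_eq_factorial]
  push_cast; ring_nf

lemma poch_mul_poch_add_half (a : ℝ) (n : ℕ) :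
    poch a n * poch (a + 1 / 2) n * 4 ^ n = poch (2 * a) (2 * n) := by
  induction n with
  | zero => simp
  | succ n ih =>
    rw [show 2 * (n + 1) = 2 * n + 1 + 1 by ring, poch_succ, poch_succ, poch_succ, poch_succ, ← ih]
    push_cast
    ring

noncomputable def oneSubSqrtCoeff (l m : ℕ) : ℝ :=
  if l = 0 then (if m = 0 then 1 else 0)
  else if l ≤ m then
    l * (2 * m - l - 1).factorial / (m.factorial * (m - l).factorial * 2 ^ (2 * m - l))
  else 0

lemma oneSubSqrtCoeff_nonneg (l m : ℕ) : 0 ≤ oneSubSqrtCoeff l m := by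
  unfold oneSubSqrtCoeff
  split_ifs <;> positivity

lemma oneSubSqrtCoeff_of_lt {l m : ℕ} (h : m < l) : oneSubSqrtCoeff l m = 0 := by
  simp [oneSubSqrtCoeff, h.not_ge, (Nat.zero_le m).trans_lt h |>.ne']

lemma oneSubSqrtCoeff_zero_right {l : ℕ} (hl : l ≠ 0) : oneSubSqrtCoeff l 0 = 0 :=
  oneSubSqrtCoeff_of_lt (Nat.pos_of_ne_zero hl)

lemma oneSubSqrtCoeff_of_le {l m : ℕ} (h : l ≤ m) (hm : m ≠ 0) :
    oneSubSqrtCoeff l m =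
      l * (2 * m - l - 1).factorial / (m.factorial * (m - l).factorial * 2 ^ (2 * m - l)) := by
  unfold oneSubSqrtCoeff
  split_ifs with hl <;> simp_all

lemma oneSubSqrtCoeff_self (l : ℕ) : oneSubSqrtCoeff l l = 1 / 2 ^ l := by
  cases l with
  | zero => simp [oneSubSqrtCoeff]
  | succ l =>
    rw [oneSubSqrtCoeff_of_le le_rfl l.succ_ne_zero, show 2 * (l + 1) - (l + 1) - 1 = l by omega,
      show 2 * (l + 1) - (l + 1) = l + 1 by omega, Nat.sub_self, Nat.factorial_succ]
    push_cast
    field_simp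
    simp

lemma oneSubSqrtCoeff_one_succ (p : ℕ) :
    oneSubSqrtCoeff 1 (p + 1) = catalan p / 2 ^ (2 * p + 1) := by
  rw [oneSubSqrtCoeff_of_le (by omega) p.succ_ne_zero, show 2 * (p + 1) - 1 - 1 = 2 * p by omega,
    show 2 * (p + 1) - 1 = 2 * p + 1 by omega, Nat.succ_sub_one]
  have h : ((2 * p).factorial : ℝ) = (p + 1).factorial * p.factorial * catalan p := by
    rw [← Nat.choose_mul_factorial_mul_factorial (show p ≤ 2 * p by omega),
      show 2 * p - p = p by omega, ← Nat.centralBinom_eq_two_mul_choose,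
      ← succ_mul_catalan_eq_centralBinom, Nat.factorial_succ]
    push_cast
    ring
  rw [h]
  field_simp
  simp

lemma oneSubSqrtCoeff_one_succ_eq_sub (p : ℕ) :
    oneSubSqrtCoeff 1 (p + 1) =
      p.centralBinom / 4 ^ p - (p + 1).centralBinom / 4 ^ (p + 1) := by
  have hcat : (catalan p : ℝ) = p.centralBinom / (p + 1) := by
    rw [eq_div_iff (by positivity), ← succ_mul_catalan_eq_centralBinom]
    push_cast
    ring
  have hsucc : ((p + 1).centralBinom : ℝ) = 2 * (2 * p + 1) * p.centralBinom / (p + 1) := by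
    rw [eq_div_iff (by positivity), mul_comm]
    exact_mod_cast Nat.succ_mul_centralBinom_succ p
  rw [oneSubSqrtCoeff_one_succ, hcat, hsucc, pow_succ, pow_succ, pow_mul]
  field_simp
  ring

lemma sum_range_succ_oneSubSqrtCoeff_one (N : ℕ) :
    ∑ m ∈ range (N + 1), oneSubSqrtCoeff 1 m = 1 - N.centralBinom / 4 ^ N := by
  induction N with
  | zero => simp [oneSubSqrtCoeff]
  | succ N ih =>
    rw [sum_range_succ, ih, oneSubSqrtCoeff_one_succ_eq_sub]
    ring

lemma sum_range_oneSubSqrtCoeff_one_le (N : ℕ) : ∑ m ∈ range N, oneSubSqrtCoeff 1 m ≤ 1 := by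
  cases N with
  | zero => simp
  | succ N =>
    rw [sum_range_succ_oneSubSqrtCoeff_one]
    have : (0 : ℝ) ≤ N.centralBinom / 4 ^ N := by positivity
    linarith

lemma sum_antidiagonal_oneSubSqrtCoeff_one (n : ℕ) :
    ∑ ij ∈ antidiagonal n, oneSubSqrtCoeff 1 ij.1 * oneSubSqrtCoeff 1 ij.2 =
      2 * oneSubSqrtCoeff 1 n - if n = 1 then 1 else 0 := by
  have h0 : oneSubSqrtCoeff 1 0 = 0 := oneSubSqrtCoeff_zero_right one_ne_zero
  match n with
  | 0 => simp [h0]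
  | 1 => simp [Nat.sum_antidiagonal_succ, h0, oneSubSqrtCoeff_self]
  | p + 2 =>
    rw [Nat.sum_antidiagonal_succ, Nat.sum_antidiagonal_succ', if_neg (by omega),
      oneSubSqrtCoeff_one_succ, catalan_succ']
    simp only [h0, zero_mul, mul_zero, sum_const_zero, zero_add, sub_zero, Nat.cast_sum,
      Nat.cast_mul, sum_div, mul_sum]
    refine sum_congr rfl fun ij hij => ?_
    rw [HasAntidiagonal.mem_antidiagonal] at hij
    rw [oneSubSqrtCoeff_one_succ, oneSubSqrtCoeff_one_succ, ← hij]
    field_simp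
    ring

lemma hasSum_oneSubSqrtCoeff_one {x : ℝ} (hx0 : 0 ≤ x) (hx1 : x < 1) :
    HasSum (fun m => oneSubSqrtCoeff 1 m * x ^ m) (1 - √(1 - x)) := by
  have hle : ∀ m, oneSubSqrtCoeff 1 m * x ^ m ≤ oneSubSqrtCoeff 1 m := fun m =>
    mul_le_of_le_one_right (oneSubSqrtCoeff_nonneg 1 m) (pow_le_one₀ hx0 hx1.le)
  have hnonneg : ∀ m, 0 ≤ oneSubSqrtCoeff 1 m * x ^ m := fun m =>
    mul_nonneg (oneSubSqrtCoeff_nonneg 1 m) (pow_nonneg hx0 m)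
  have hsummable : Summable (oneSubSqrtCoeff 1) :=
    summable_of_sum_range_le (oneSubSqrtCoeff_nonneg 1) sum_range_oneSubSqrtCoeff_one_le
  have hs : Summable fun m => oneSubSqrtCoeff 1 m * x ^ m := hsummable.of_nonneg_of_le hnonneg hle
  set g := ∑' m, oneSubSqrtCoeff 1 m * x ^ m
  have hg : g ≤ 1 := (hs.tsum_le_tsum hle hsummable).trans
    (tsum_le_of_sum_range_le (oneSubSqrtCoeff_nonneg 1) sum_range_oneSubSqrtCoeff_one_le)
  have hsq : g * g = 2 * g - x := by
    have hnorm : Summable fun m => ‖oneSubSqrtCoeff 1 m * x ^ m‖ :=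
      hs.congr fun m => (Real.norm_of_nonneg (hnonneg m)).symm
    rw [tsum_mul_tsum_eq_tsum_sum_antidiagonal_of_summable_norm hnorm hnorm]
    have hconv : ∀ n, ∑ ij ∈ antidiagonal n,
        oneSubSqrtCoeff 1 ij.1 * x ^ ij.1 * (oneSubSqrtCoeff 1 ij.2 * x ^ ij.2) =
          2 * (oneSubSqrtCoeff 1 n * x ^ n) - if n = 1 then x else 0 := fun n => by
      have hterm : ∀ ij ∈ antidiagonal n,
          oneSubSqrtCoeff 1 ij.1 * x ^ ij.1 * (oneSubSqrtCoeff 1 ij.2 * x ^ ij.2) =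
            oneSubSqrtCoeff 1 ij.1 * oneSubSqrtCoeff 1 ij.2 * x ^ n := fun ij hij => by
        rw [← HasAntidiagonal.mem_antidiagonal.mp hij, pow_add]
        ring
      rw [sum_congr rfl hterm, ← sum_mul, sum_antidiagonal_oneSubSqrtCoeff_one]
      split_ifs with h
      · subst h
        ring
      · ring
    rw [tsum_congr hconv, (hs.mul_left 2).tsum_sub ⟨_, hasSum_ite_eq 1 x⟩, tsum_mul_left,
      tsum_ite_eq]
  have hroot : √(1 - x) = 1 - g := by
    rw [← Real.sqrt_sq (sub_nonneg.mpr hg)]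
    congr 1
    linear_combination -hsq
  rw [hroot, sub_sub_cancel]
  exact hs.hasSum

lemma oneSubSqrtCoeff_add_two_succ (l m : ℕ) :
    oneSubSqrtCoeff (l + 2) (m + 1) =
      2 * oneSubSqrtCoeff (l + 1) (m + 1) - oneSubSqrtCoeff l m := by
  rcases lt_trichotomy m l with h | rfl | h
  · rw [oneSubSqrtCoeff_of_lt (by omega), oneSubSqrtCoeff_of_lt (by omega),
      oneSubSqrtCoeff_of_lt h]
    ring
  · rw [oneSubSqrtCoeff_of_lt (by omega), oneSubSqrtCoeff_self, oneSubSqrtCoeff_self, pow_succ]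
    field_simp
    ring
  obtain ⟨j, rfl⟩ : ∃ j, m = l + 1 + j := ⟨m - l - 1, by omega⟩
  rw [oneSubSqrtCoeff_of_le (by omega) (by omega), oneSubSqrtCoeff_of_le (by omega) (by omega),
    oneSubSqrtCoeff_of_le (by omega) (by omega)]
  rw [show 2 * (l + 1 + j + 1) - (l + 2) - 1 = l + 2 * j + 1 by omega,
    show l + 1 + j + 1 - (l + 2) = j by omega,
    show 2 * (l + 1 + j + 1) - (l + 2) = l + 2 * j + 2 by omega,
    show 2 * (l + 1 + j + 1) - (l + 1) - 1 = l + 2 * j + 1 + 1 by omega,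
    show l + 1 + j + 1 - (l + 1) = j + 1 by omega,
    show 2 * (l + 1 + j + 1) - (l + 1) = l + 2 * j + 2 + 1 by omega,
    show 2 * (l + 1 + j) - l - 1 = l + 2 * j + 1 by omega,
    show l + 1 + j - l = j + 1 by omega,
    show 2 * (l + 1 + j) - l = l + 2 * j + 2 by omega,
    Nat.factorial_succ (l + 2 * j + 1), Nat.factorial_succ j, Nat.factorial_succ (l + 1 + j),
    pow_succ]
  push_cast
  field_simp
  ring

lemma hasSum_oneSubSqrtCoeff (l : ℕ) {x : ℝ} (hx0 : 0 ≤ x) (hx1 : x < 1) :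
    HasSum (fun m => oneSubSqrtCoeff l m * x ^ m) ((1 - √(1 - x)) ^ l) := by
  induction l using Nat.twoStepInduction with
  | zero =>
    rw [pow_zero]
    convert hasSum_ite_eq 0 (1 : ℝ) using 2 with m
    rcases eq_or_ne m 0 with rfl | hm <;> simp [oneSubSqrtCoeff, *]
  | one => simpa using hasSum_oneSubSqrtCoeff_one hx0 hx1
  | more l ih ih₁ =>
    set y := 1 - √(1 - x)
    have hy : y ^ 2 = 2 * y - x := by
      linear_combination Real.sq_sqrt (sub_nonneg.mpr hx1.le)
    have ih₁' := (hasSum_nat_add_iff' 1).mpr ih₁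
    refine (hasSum_nat_add_iff' 1).mp ?_
    simp only [sum_range_one, oneSubSqrtCoeff_zero_right (Nat.succ_ne_zero _), zero_mul,
      sub_zero, oneSubSqrtCoeff_add_two_succ] at ih₁' ⊢
    convert (ih₁'.mul_left 2).sub (ih.mul_left x) using 1
    · ext m
      ring
    · linear_combination y ^ l * hy

lemma hasSum_oneSubSqrtCoeff_mul_one_sub_sq (l : ℕ) {s : ℝ} (hs0 : 0 < s) (hs1 : s ≤ 1) :
    HasSum (fun m => oneSubSqrtCoeff l m * (1 - s ^ 2) ^ m) ((1 - s) ^ l) := by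
  have h := hasSum_oneSubSqrtCoeff l (x := 1 - s ^ 2) (by nlinarith) (by nlinarith)
  rwa [sub_sub_cancel, sqrt_sq hs0.le] at h

lemma oneSubSqrtCoeff_add (l n : ℕ) :
    oneSubSqrtCoeff l (l + n) =
      poch (l / 2) n * poch ((l + 1) / 2) n / (2 ^ l * poch (l + 1) n * n.factorial) := by
  rcases l with _ | l
  · rcases n with _ | n
    · simp [oneSubSqrtCoeff]
    · have : poch 0 (n + 1) = 0 := prod_eq_zero (mem_range.2 n.succ_pos) (by simp)
      simp [oneSubSqrtCoeff, this]
  have hfac : ((l + 2 * n).factorial : ℝ) =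
      l.factorial * (poch ((l + 1) / 2) n * poch ((l + 1) / 2 + 1 / 2) n * 4 ^ n) := by
    rw [poch_mul_poch_add_half, show 2 * (((l : ℝ) + 1) / 2) = l + 1 by ring, factorial_mul_poch]
  rw [oneSubSqrtCoeff_of_le (by omega) (by omega),
    show 2 * (l + 1 + n) - (l + 1) - 1 = l + 2 * n by omega, show l + 1 + n - (l + 1) = n by omega,
    show 2 * (l + 1 + n) - (l + 1) = l + 1 + 2 * n by omega,
    hfac, ← factorial_mul_poch (l + 1) n, Nat.factorial_succ, pow_add, pow_mul]
  have := poch_pos (a := (l : ℝ) + 1 + 1) (by positivity) n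
  push_cast
  rw [show ((l : ℝ) + 1 + 1) / 2 = (l + 1) / 2 + 1 / 2 by ring]
  field_simp
  ring

end

open Set

lemma hasSum_integral_of_nonneg {α ι : Type*} [MeasurableSpace α] [Countable ι] {μ : Measure α}
    {F : ι → α → ℝ} {f : α → ℝ} (hF : ∀ n, AEStronglyMeasurable (F n) μ)
    (hF₀ : ∀ n, 0 ≤ᵐ[μ] F n) (hf : Integrable f μ) (h : ∀ᵐ a ∂μ, HasSum (F · a) (f a)) :
    HasSum (fun n => ∫ a, F n a ∂μ) (∫ a, f a ∂μ) :=
  hasSum_integral_of_dominated_convergence F hF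
    (fun n => (hF₀ n).mono fun _ ha => (Real.norm_of_nonneg ha).le) (h.mono fun _ ha => ha.summable)
    (hf.congr (h.mono fun _ ha => ha.tsum_eq.symm)) h

lemma integral_rpow_mul_one_sub_pow {k : ℝ} (hk : 0 < k) (m : ℕ) :
    ∫ t in Ioo 0 1, t ^ (k - 1) * (1 - t) ^ m = Gamma k * m.factorial / Gamma (k + m + 1) := by
  have hB := Complex.betaIntegral_eq_Gamma_mul_div k (m + 1) (by simpa) (by simp; positivity)
  have hcast : ∫ t in Ioc (0:ℝ) 1, (t : ℂ) ^ ((k : ℂ) - 1) * (1 - (t : ℂ)) ^ ((m + 1 : ℂ) - 1) =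
      ((∫ t in Ioc (0:ℝ) 1, t ^ (k - 1) * (1 - t) ^ m : ℝ) : ℂ) := by
    rw [← integral_complex_ofReal]
    refine setIntegral_congr_fun measurableSet_Ioc fun t ht => ?_
    rw [add_sub_cancel_right, Complex.cpow_natCast, Complex.ofReal_mul,
      Complex.ofReal_cpow ht.1.le]
    push_cast
    rfl
  rw [Complex.betaIntegral, intervalIntegral.integral_of_le zero_le_one, hcast] at hB
  rw [← integral_Ioc_eq_integral_Ioo, ← Complex.ofReal_inj, hB, ← Gamma_nat_eq_factorial,
    add_assoc]
  push_cast
  simp only [← Complex.ofReal_natCast, ← Complex.ofReal_one, ← Complex.ofReal_add,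
    Complex.Gamma_ofReal]

lemma integrableOn_rpow_mul_one_sub_pow {k : ℝ} (hk : 0 < k) (m : ℕ) :
    IntegrableOn (fun t : ℝ => t ^ (k - 1) * (1 - t) ^ m) (Ioo 0 1) := by
  rw [← intervalIntegrable_iff_integrableOn_Ioo_of_le zero_le_one]
  exact (intervalIntegral.intervalIntegrable_rpow' (by linarith)).mul_continuousOn
    (by fun_prop)

section Substitution

variable {r : ℝ}

lemma hasDerivAt_sq_sub_sq_div (s : ℝ) :
    HasDerivAt (fun s => (s ^ 2 - r ^ 2) / (1 - r ^ 2)) (2 * s / (1 - r ^ 2)) s := by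
  simpa using ((hasDerivAt_pow 2 s).sub_const (r ^ 2)).div_const (1 - r ^ 2)

variable (hr0 : 0 ≤ r) (hr1 : r < 1)
include hr0 hr1

lemma image_sq_sub_sq_div_Ioo :
    (fun s => (s ^ 2 - r ^ 2) / (1 - r ^ 2)) '' Ioo r 1 = Ioo 0 1 := by
  have hz : 0 < 1 - r ^ 2 := by nlinarith
  refine Subset.antisymm ?_ ?_
  · rintro _ ⟨s, ⟨hrs, hs1⟩, rfl⟩
    constructor
    · exact div_pos (by nlinarith) hz
    · rw [div_lt_one hz]; nlinarith
  · have h := intermediate_value_Ioo hr1.le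
      (f := fun s => (s ^ 2 - r ^ 2) / (1 - r ^ 2)) (by fun_prop)
    rwa [sub_self, zero_div, one_pow, div_self hz.ne'] at h

lemma injOn_sq_sub_sq_div : InjOn (fun s => (s ^ 2 - r ^ 2) / (1 - r ^ 2)) (Ioo r 1) := by
  intro a ha b hb h
  have hz : 1 - r ^ 2 ≠ 0 := by nlinarith
  rw [div_left_inj' hz, sub_left_inj] at h
  exact (pow_left_inj₀ (hr0.trans ha.1.le) (hr0.trans hb.1.le) two_ne_zero).mp h

lemma integral_Ioo_mul_comp_sq_sub_sq_div (g : ℝ → ℝ) :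
    ∫ s in Ioo r 1, 2 * s / (1 - r ^ 2) * g ((s ^ 2 - r ^ 2) / (1 - r ^ 2)) =
      ∫ t in Ioo 0 1, g t := by
  rw [← image_sq_sub_sq_div_Ioo hr0 hr1, integral_image_eq_integral_abs_deriv_smul
    measurableSet_Ioo (fun s _ => (hasDerivAt_sq_sub_sq_div s).hasDerivWithinAt)
    (injOn_sq_sub_sq_div hr0 hr1)]
  refine setIntegral_congr_fun measurableSet_Ioo fun s hs => ?_
  have hz : 0 < 1 - r ^ 2 := by nlinarith
  rw [smul_eq_mul, abs_of_pos (div_pos (by linarith [hs.1]) hz)]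

lemma integrableOn_Ioo_mul_comp_sq_sub_sq_div_iff (g : ℝ → ℝ) :
    IntegrableOn (fun s => 2 * s / (1 - r ^ 2) * g ((s ^ 2 - r ^ 2) / (1 - r ^ 2))) (Ioo r 1) ↔
      IntegrableOn g (Ioo 0 1) := by
  rw [← image_sq_sub_sq_div_Ioo hr0 hr1, integrableOn_image_iff_integrableOn_abs_deriv_smul
    measurableSet_Ioo (fun s _ => (hasDerivAt_sq_sub_sq_div s).hasDerivWithinAt)
    (injOn_sq_sub_sq_div hr0 hr1)]
  refine integrableOn_congr_fun (fun s hs => ?_) measurableSet_Ioo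
  have hz : 0 < 1 - r ^ 2 := by nlinarith
  rw [smul_eq_mul, abs_of_pos (div_pos (by linarith [hs.1]) hz)]

end Substitution

section Moments

variable {k r : ℝ} (hr0 : 0 ≤ r) (hr1 : r < 1) (m : ℕ)
include hr0 hr1

lemma eqOn_mul_one_sub_sq_pow_mul_rpow :
    EqOn (fun s => s * (1 - s ^ 2) ^ m * (s ^ 2 - r ^ 2) ^ (k - 1))
      (fun s => (1 - r ^ 2) ^ (k + m) / 2 * (2 * s / (1 - r ^ 2) *
        (((s ^ 2 - r ^ 2) / (1 - r ^ 2)) ^ (k - 1) * (1 - (s ^ 2 - r ^ 2) / (1 - r ^ 2)) ^ m)))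
      (Ioo r 1) := by
  intro s ⟨hrs, hs1⟩
  have hz : 0 < 1 - r ^ 2 := by nlinarith
  have hpow : (1 - r ^ 2) ^ (k + m) = (1 - r ^ 2) ^ (k - 1) * (1 - r ^ 2) ^ m * (1 - r ^ 2) := by
    rw [← rpow_natCast (1 - r ^ 2) m, ← rpow_add hz, ← rpow_add_one hz.ne']
    ring_nf
  dsimp only
  rw [div_rpow (by nlinarith) hz.le, one_sub_div hz.ne', sub_sub_sub_cancel_right, div_pow, hpow]
  have := rpow_pos_of_pos hz (k - 1)
  field_simp

lemma integral_mul_one_sub_sq_pow_mul_rpow (hk : 0 < k) :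
    ∫ s in Ioo r 1, s * (1 - s ^ 2) ^ m * (s ^ 2 - r ^ 2) ^ (k - 1) =
      (1 - r ^ 2) ^ (k + m) * (Gamma k * m.factorial) / (2 * Gamma (k + m + 1)) := by
  rw [setIntegral_congr_fun measurableSet_Ioo (eqOn_mul_one_sub_sq_pow_mul_rpow hr0 hr1 m),
    integral_const_mul,
    integral_Ioo_mul_comp_sq_sub_sq_div hr0 hr1 (fun t => t ^ (k - 1) * (1 - t) ^ m),
    integral_rpow_mul_one_sub_pow hk]
  ring

lemma integrableOn_mul_one_sub_sq_pow_mul_rpow (hk : 0 < k) :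
    IntegrableOn (fun s => s * (1 - s ^ 2) ^ m * (s ^ 2 - r ^ 2) ^ (k - 1)) (Ioo r 1) :=
  (integrableOn_congr_fun (eqOn_mul_one_sub_sq_pow_mul_rpow hr0 hr1 m) measurableSet_Ioo).mpr
    (((integrableOn_Ioo_mul_comp_sq_sub_sq_div_iff hr0 hr1 _).mpr
      (integrableOn_rpow_mul_one_sub_pow hk m)).const_mul _)

end Moments

lemma hasSum_oneSubSqrtCoeff_mul_integral {k r : ℝ} (hk : 0 < k) (hr0 : 0 ≤ r) (hr1 : r < 1)
    (l : ℕ) :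
    HasSum (fun m => oneSubSqrtCoeff l m *
        ∫ s in Ioo r 1, s * (1 - s ^ 2) ^ m * (s ^ 2 - r ^ 2) ^ (k - 1))
      (∫ s in Ioo r 1, s * (1 - s) ^ l * (s ^ 2 - r ^ 2) ^ (k - 1)) := by
  simp_rw [← integral_const_mul]
  refine hasSum_integral_of_nonneg (fun m => by fun_prop) (fun m => ?_) ?_ ?_
  · refine ae_restrict_of_forall_mem measurableSet_Ioo fun s ⟨hrs, hs1⟩ => ?_
    have hs : 0 < s := hr0.trans_lt hrs
    have hsr := rpow_nonneg (by nlinarith : 0 ≤ s ^ 2 - r ^ 2) (k - 1)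
    have hc := oneSubSqrtCoeff_nonneg l m
    have h1s : 0 ≤ 1 - s ^ 2 := by nlinarith
    dsimp only [Pi.zero_apply]
    positivity
  · refine (integrableOn_mul_one_sub_sq_pow_mul_rpow hr0 hr1 0 hk).mono' (by fun_prop) ?_
    refine ae_restrict_of_forall_mem measurableSet_Ioo fun s ⟨hrs, hs1⟩ => ?_
    have hs : 0 < s := hr0.trans_lt hrs
    have hsr := rpow_nonneg (by nlinarith : 0 ≤ s ^ 2 - r ^ 2) (k - 1)
    have h1s : 0 ≤ 1 - s := by linarith
    rw [Real.norm_of_nonneg (by positivity), pow_zero, mul_one]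
    exact mul_le_mul_of_nonneg_right
      (mul_le_of_le_one_right hs.le (pow_le_one₀ h1s (by linarith))) hsr
  · refine ae_restrict_of_forall_mem measurableSet_Ioo fun s ⟨hrs, hs1⟩ => ?_
    have h := (hasSum_oneSubSqrtCoeff_mul_one_sub_sq l (hr0.trans_lt hrs) hs1.le).mul_right
      (s * (s ^ 2 - r ^ 2) ^ (k - 1))
    simp only [mul_assoc, mul_left_comm _ s, mul_comm ((1 - s) ^ l)] at h ⊢
    exact h

lemma wendland_term_eq_twoF1_term {k z : ℝ} (hk : 0 < k) (hz : 0 < z) (l n : ℕ) :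
    1 / (Gamma k * 2 ^ (k - 1)) * (oneSubSqrtCoeff l (n + l) *
      (z ^ (k + ((n + l : ℕ) : ℝ)) * (Gamma k * (n + l).factorial) /
        (2 * Gamma (k + ((n + l : ℕ) : ℝ) + 1)))) =
      Gamma ((l : ℝ) + 1) / ((2:ℝ) ^ ((l : ℝ) + k) * Gamma ((l : ℝ) + k + 1)) * z ^ ((l : ℝ) + k) *
        (poch ((l : ℝ) / 2) n * poch (((l : ℝ) + 1) / 2) n / poch ((l : ℝ) + k + 1) n * z ^ n /
          n.factorial) := by
  rw [add_comm n l, oneSubSqrtCoeff_add, ← factorial_mul_poch, Gamma_nat_eq_factorial,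
    show k + ((l + n : ℕ) : ℝ) + 1 = l + k + 1 + n by push_cast; ring,
    ← Gamma_mul_poch (by positivity), show k + ((l + n : ℕ) : ℝ) = (l + k) + n by push_cast; ring,
    rpow_add hz, rpow_natCast, rpow_add two_pos, rpow_natCast, rpow_sub_one two_pos.ne']
  have := Gamma_pos_of_pos hk
  have := Gamma_pos_of_pos (by positivity : 0 < (l : ℝ) + k + 1)
  have := poch_pos (by positivity : 0 < (l : ℝ) + k + 1) n
  have := poch_pos (by positivity : 0 < (l : ℝ) + 1) n
  field_simp

theorem wendland_hypergeometric_general (k : ℝ) (hk : 0 < k) (l : ℕ)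
    (r : ℝ) (hr0 : 0 ≤ r) (hr1 : r ≤ 1) :
    wendland l k r =
      Real.Gamma ((l : ℝ) + 1) / ((2:ℝ) ^ ((l : ℝ) + k) * Real.Gamma ((l : ℝ) + k + 1)) *
        (1 - r ^ 2) ^ ((l : ℝ) + k) *
        twoF1 ((l : ℝ) / 2) (((l : ℝ) + 1) / 2) ((l : ℝ) + k + 1) (1 - r ^ 2) := by
  rcases hr1.eq_or_lt with rfl | hr1
  · simp [wendland, zero_rpow (by positivity : (l : ℝ) + k ≠ 0)]
  have hz : 0 < 1 - r ^ 2 := by nlinarith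
  have hsum := (hasSum_nat_add_iff' l).mpr
    ((hasSum_oneSubSqrtCoeff_mul_integral hk hr0 hr1 l).mul_left (1 / (Gamma k * 2 ^ (k - 1))))
  rw [Finset.sum_eq_zero fun m hm => by
    rw [oneSubSqrtCoeff_of_lt (Finset.mem_range.mp hm), zero_mul, mul_zero], sub_zero] at hsum
  simp only [integral_mul_one_sub_sq_pow_mul_rpow hr0 hr1 _ hk,
    wendland_term_eq_twoF1_term hk hz] at hsum
  rw [wendland, if_pos hr1.le, intervalIntegral.integral_of_le hr1.le,
    integral_Ioc_eq_integral_Ioo, ← hsum.tsum_eq, twoF1, ← tsum_mul_left]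

theorem wendland_hypergeometric (k : ℝ) (hk : 0 < k) (l : ℕ) (hl : 1 ≤ l)
    (r : ℝ) (hr0 : 0 ≤ r) (hr1 : r ≤ 1) :
    wendland l k r =
      Real.Gamma ((l : ℝ) + 1) / ((2:ℝ) ^ ((l : ℝ) + k) * Real.Gamma ((l : ℝ) + k + 1)) *
        (1 - r ^ 2) ^ ((l : ℝ) + k) *
        twoF1 ((l : ℝ) / 2) (((l : ℝ) + 1) / 2) ((l : ℝ) + k + 1) (1 - r ^ 2) :=
  wendland_hypergeometric_general k hk l r hr0 hr1
end

section
/- For real x > 0 and 0 < s < 1, one has (x/(x+s))^{1-s} ≤ Γ(x+s)/(x^s Γ(x)) ≤ 1. -/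
open Real

theorem wendel_inequality (x s : ℝ) (hx : 0 < x) (hs0 : 0 < s) (hs1 : s < 1) :
    (x / (x + s)) ^ (1 - s) ≤ Real.Gamma (x + s) / (x ^ s * Real.Gamma x) ∧
      Real.Gamma (x + s) / (x ^ s * Real.Gamma x) ≤ 1 := by
  have hxs : (0:ℝ) < x + s := by linarith
  have hG : 0 < Real.Gamma x := Real.Gamma_pos_of_pos hx
  have hGs : 0 < Real.Gamma (x + s) := Real.Gamma_pos_of_pos hxs
  have hxp : (0:ℝ) < x ^ s := Real.rpow_pos_of_pos hx s
  have h1s : (0:ℝ) < 1 - s := by linarith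
  -- Upper bound: Γ(x+s) ≤ Γ(x)^(1-s) * Γ(x+1)^s = x^s Γ(x)
  have hub : Real.Gamma (x + s) ≤ x ^ s * Real.Gamma x := by
    have := Real.Gamma_mul_add_mul_le_rpow_Gamma_mul_rpow_Gamma hx
      (by linarith : (0:ℝ) < x + 1) h1s hs0 (by ring)
    have heq : (1 - s) * x + s * (x + 1) = x + s := by ring
    rw [heq, Real.Gamma_add_one hx.ne'] at this
    calc Real.Gamma (x + s) ≤ Real.Gamma x ^ (1 - s) * (x * Real.Gamma x) ^ s := this
      _ = x ^ s * Real.Gamma x := by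
          rw [Real.mul_rpow hx.le hG.le,
            show Real.Gamma x ^ (1-s) * (x ^ s * Real.Gamma x ^ s)
              = x ^ s * (Real.Gamma x ^ (1-s) * Real.Gamma x ^ s) by ring,
            ← Real.rpow_add hG]
          norm_num
  -- Lower bound: x Γ(x) = Γ(x+1) ≤ Γ(x+s)^s Γ(x+s+1)^(1-s) = (x+s)^(1-s) Γ(x+s)
  have hlb : x * Real.Gamma x ≤ (x + s) ^ (1 - s) * Real.Gamma (x + s) := by
    have := Real.Gamma_mul_add_mul_le_rpow_Gamma_mul_rpow_Gamma hxs
      (by linarith : (0:ℝ) < x + s + 1) hs0 h1s (by ring)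
    have heq : s * (x + s) + (1 - s) * (x + s + 1) = x + 1 := by ring
    rw [heq, Real.Gamma_add_one hx.ne', Real.Gamma_add_one hxs.ne'] at this
    calc x * Real.Gamma x
        ≤ Real.Gamma (x + s) ^ s * ((x + s) * Real.Gamma (x + s)) ^ (1 - s) := this
      _ = (x + s) ^ (1 - s) * Real.Gamma (x + s) := by
          rw [Real.mul_rpow hxs.le hGs.le,
            show Real.Gamma (x+s) ^ s * ((x+s) ^ (1-s) * Real.Gamma (x+s) ^ (1-s))
              = (x+s) ^ (1-s) * (Real.Gamma (x+s) ^ s * Real.Gamma (x+s) ^ (1-s)) by ring,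
            ← Real.rpow_add hGs]
          norm_num
  constructor
  · rw [Real.div_rpow hx.le hxs.le, div_le_div_iff₀ (Real.rpow_pos_of_pos hxs _) (by positivity)]
    have hxsplit : x ^ (1 - s) * (x ^ s * Real.Gamma x) = x * Real.Gamma x := by
      rw [show x ^ (1-s) * (x ^ s * Real.Gamma x) = x ^ (1-s) * x ^ s * Real.Gamma x by ring,
        ← Real.rpow_add hx]
      norm_num
    rw [hxsplit]
    linarith [hlb]
  · rw [div_le_one (by positivity)]
    exact hub
end

section
/- For real x > 0 and reals a, b with a ≥ 0 and b - a ≥ 1, one has Γ(x+a)/Γ(x+b) ≤ x^{a-b}. -/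
open Real

theorem gammaRatio_le_rpow (x a b : ℝ) (hx : 0 < x) (ha : 0 ≤ a) (hab : 1 ≤ b - a) :
    Real.Gamma (x + a) / Real.Gamma (x + b) ≤ x ^ (a - b) := by
  have hxa : 0 < x + a := by linarith
  have hxa1 : (0:ℝ) < x + a + 1 := by linarith
  have hxb : 0 < x + b := by linarith
  have hGa : 0 < Real.Gamma (x + a) := Real.Gamma_pos_of_pos hxa
  have hGb : 0 < Real.Gamma (x + b) := Real.Gamma_pos_of_pos hxb
  have hGa1 : Real.Gamma (x + a + 1) = (x + a) * Real.Gamma (x + a) :=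
    Real.Gamma_add_one hxa.ne'
  -- secant inequality for log ∘ Gamma
  have hsec := Real.convexOn_log_Gamma.secant_mono (a := x + a) (x := x + a + 1) (y := x + b)
    (Set.mem_Ioi.2 hxa) (Set.mem_Ioi.2 hxa1) (Set.mem_Ioi.2 hxb)
    (by intro h; linarith [congrArg id h]) (by intro h; nlinarith [congrArg id h])
    (by linarith)
  simp only [Function.comp] at hsec
  have key : Real.log (x + a) ≤
      (Real.log (Real.Gamma (x + b)) - Real.log (Real.Gamma (x + a))) / (b - a) := by
    have h1 : (Real.log (Real.Gamma (x + a + 1)) - Real.log (Real.Gamma (x + a))) /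
        (x + a + 1 - (x + a)) = Real.log (x + a) := by
      rw [hGa1, Real.log_mul hxa.ne' hGa.ne']
      ring
    have h2 : x + b - (x + a) = b - a := by ring
    rw [h1, h2] at hsec
    exact hsec
  have hba : (0:ℝ) < b - a := by linarith
  have key2 : (b - a) * Real.log x ≤
      Real.log (Real.Gamma (x + b)) - Real.log (Real.Gamma (x + a)) := by
    have hlx : Real.log x ≤ Real.log (x + a) := Real.log_le_log hx (by linarith)
    calc (b - a) * Real.log x ≤ (b - a) * Real.log (x + a) := by nlinarith
      _ ≤ _ := by
          rw [mul_comm, ← le_div_iff₀ hba]; exact key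
  have hdiv : 0 < Real.Gamma (x + a) / Real.Gamma (x + b) := div_pos hGa hGb
  rw [← Real.log_le_log_iff hdiv (Real.rpow_pos_of_pos hx _), Real.log_div hGa.ne' hGb.ne',
    Real.log_rpow hx]
  nlinarith
end

section
/- For fixed reals a, b, the ratio Γ(x+a)/Γ(x+b) is asymptotically equal to x^{a-b} as x → ∞; i.e., lim_{x→∞} (Γ(x+a)/Γ(x+b)) · x^{b-a} = 1. -/
/-!
Log-convexity of Γ on (0, ∞) together with Γ(x + 1) = x Γ(x) gives Wendel's inequalities
(x / (x + s))^(1 - s) ≤ Γ(x + s) / (Γ(x) x^s) ≤ 1 for 0 ≤ s ≤ 1, so this ratio tends to 1.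
The functional equation changes the ratio for c + 1 by the factor (x + c) / x → 1 relative to
that for c, which extends the limit from c ∈ [0, 1] to every real c. Finally
Γ(x + a) / Γ(x + b) · x^(b - a) is the quotient of these ratios for c = a and c = b.
-/

open Real Filter Topology

theorem tendsto_add_const_div_self_atTop {𝕜 : Type*} [Field 𝕜] [LinearOrder 𝕜]
    [IsStrictOrderedRing 𝕜] [TopologicalSpace 𝕜] [OrderTopology 𝕜] (c : 𝕜) :
    Tendsto (fun x => (x + c) / x) atTop (𝓝 1) := by
  have h : Tendsto (fun x => 1 + c / x) atTop (𝓝 (1 + 0)) :=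
    tendsto_const_nhds.add (tendsto_const_nhds.div_atTop tendsto_id)
  rw [add_zero] at h
  refine h.congr' ?_
  filter_upwards [eventually_gt_atTop 0] with x hx
  rw [add_div, div_self hx.ne']

theorem tendsto_self_div_add_const_atTop {𝕜 : Type*} [Field 𝕜] [LinearOrder 𝕜]
    [IsStrictOrderedRing 𝕜] [TopologicalSpace 𝕜] [OrderTopology 𝕜] (c : 𝕜) :
    Tendsto (fun x => x / (x + c)) atTop (𝓝 1) := by
  simpa using (tendsto_add_const_div_self_atTop c).inv₀ one_ne_zero

namespace Real

theorem Gamma_add_le_Gamma_mul_rpow {s x : ℝ} (hs₀ : 0 ≤ s) (hs₁ : s ≤ 1) (hx : 0 < x) :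
    Gamma (x + s) ≤ Gamma x * x ^ s := by
  have hΓx := Gamma_pos_of_pos hx
  have hconv := convexOn_log_Gamma.2 (Set.mem_Ioi.mpr hx)
    (Set.mem_Ioi.mpr (by linarith : 0 < x + 1)) (by linarith : 0 ≤ 1 - s) hs₀ (by ring)
  have hlog : log (Gamma (x + s)) ≤ log (Gamma x * x ^ s) := by
    simp only [smul_eq_mul, Function.comp_apply] at hconv
    rw [show (1 - s) * x + s * (x + 1) = x + s by ring, Gamma_add_one hx.ne',
      log_mul hx.ne' hΓx.ne'] at hconv
    rw [log_mul hΓx.ne' (rpow_pos_of_pos hx s).ne', log_rpow hx]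
    linarith
  exact (log_le_log_iff (Gamma_pos_of_pos (by linarith)) (by positivity)).1 hlog

theorem mul_Gamma_le_Gamma_add_mul_rpow {s x : ℝ} (hs₀ : 0 ≤ s) (hs₁ : s ≤ 1) (hx : 0 < x) :
    x * Gamma x ≤ Gamma (x + s) * (x + s) ^ (1 - s) := by
  have h := Gamma_add_le_Gamma_mul_rpow (s := 1 - s) (x := x + s)
    (by linarith) (by linarith) (by linarith)
  rwa [show x + s + (1 - s) = x + 1 by ring, Gamma_add_one hx.ne'] at h

noncomputable def gammaShiftRatio (c x : ℝ) : ℝ := Gamma (x + c) / (Gamma x * x ^ c)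

theorem gammaShiftRatio_le_one {s x : ℝ} (hs₀ : 0 ≤ s) (hs₁ : s ≤ 1) (hx : 0 < x) :
    gammaShiftRatio s x ≤ 1 :=
  div_le_one_of_le₀ (Gamma_add_le_Gamma_mul_rpow hs₀ hs₁ hx)
    (mul_pos (Gamma_pos_of_pos hx) (rpow_pos_of_pos hx s)).le

theorem div_add_rpow_le_gammaShiftRatio {s x : ℝ} (hs₀ : 0 ≤ s) (hs₁ : s ≤ 1) (hx : 0 < x) :
    (x / (x + s)) ^ (1 - s) ≤ gammaShiftRatio s x := by
  have hxs : 0 < x + s := by linarith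
  have key := mul_Gamma_le_Gamma_add_mul_rpow hs₀ hs₁ hx
  have hpos : 0 < Gamma x * x ^ s := mul_pos (Gamma_pos_of_pos hx) (rpow_pos_of_pos hx s)
  rw [gammaShiftRatio, le_div_iff₀ hpos, div_rpow hx.le hxs.le]
  calc x ^ (1 - s) / (x + s) ^ (1 - s) * (Gamma x * x ^ s)
      = x * Gamma x / (x + s) ^ (1 - s) := by
        rw [rpow_sub hx, rpow_one]; field_simp
    _ ≤ Gamma (x + s) := by rwa [div_le_iff₀ (rpow_pos_of_pos hxs _)]

theorem tendsto_gammaShiftRatio_of_mem_Icc {s : ℝ} (hs₀ : 0 ≤ s) (hs₁ : s ≤ 1) :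
    Tendsto (gammaShiftRatio s) atTop (𝓝 1) := by
  have hlower : Tendsto (fun x => (x / (x + s)) ^ (1 - s)) atTop (𝓝 1) := by
    simpa using (tendsto_self_div_add_const_atTop s).rpow_const (Or.inr (by linarith))
  refine tendsto_of_tendsto_of_tendsto_of_le_of_le' hlower tendsto_const_nhds ?_ ?_
  · filter_upwards [eventually_gt_atTop 0] with x hx
    exact div_add_rpow_le_gammaShiftRatio hs₀ hs₁ hx
  · filter_upwards [eventually_gt_atTop 0] with x hx
    exact gammaShiftRatio_le_one hs₀ hs₁ hx

theorem gammaShiftRatio_add_one {c x : ℝ} (hx : 0 < x) (hxc : x + c ≠ 0) :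
    gammaShiftRatio (c + 1) x = gammaShiftRatio c x * ((x + c) / x) := by
  rw [gammaShiftRatio, gammaShiftRatio, ← add_assoc, Gamma_add_one hxc, rpow_add_one hx.ne']
  field_simp

theorem tendsto_gammaShiftRatio_add_one_iff (c : ℝ) :
    Tendsto (gammaShiftRatio (c + 1)) atTop (𝓝 1) ↔ Tendsto (gammaShiftRatio c) atTop (𝓝 1) := by
  have heq : gammaShiftRatio (c + 1) =ᶠ[atTop] fun x => gammaShiftRatio c x * ((x + c) / x) := by
    filter_upwards [eventually_gt_atTop 0, eventually_gt_atTop (-c)] with x hx hxc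
    exact gammaShiftRatio_add_one hx (by linarith)
  rw [tendsto_congr' heq]
  simpa only [mul_one] using
    tendsto_mul_iff_of_ne_zero (x := 1) (tendsto_add_const_div_self_atTop c) one_ne_zero

theorem tendsto_gammaShiftRatio (c : ℝ) : Tendsto (gammaShiftRatio c) atTop (𝓝 1) := by
  suffices h : ∀ n : ℤ, Tendsto (gammaShiftRatio (Int.fract c + n)) atTop (𝓝 1) by
    simpa using h ⌊c⌋
  intro n
  induction n using Int.induction_on with
  | zero =>
    simpa using tendsto_gammaShiftRatio_of_mem_Icc (Int.fract_nonneg c) (Int.fract_lt_one c).le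
  | succ k ih =>
    convert (tendsto_gammaShiftRatio_add_one_iff _).2 ih using 2
    push_cast; ring
  | pred k ih =>
    rw [← tendsto_gammaShiftRatio_add_one_iff]
    convert ih using 2
    push_cast; ring

end Real

theorem gammaRatio_asymptotic (a b : ℝ) :
    Tendsto (fun x : ℝ => Real.Gamma (x + a) / Real.Gamma (x + b) * x ^ (b - a))
      atTop (nhds 1) := by
  have h := (tendsto_gammaShiftRatio a).div (tendsto_gammaShiftRatio b) one_ne_zero
  rw [div_one] at h
  refine h.congr' ?_
  filter_upwards [eventually_gt_atTop 0, eventually_gt_atTop (-b)] with x hx hxb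
  have hΓ := Gamma_pos_of_pos hx
  have hΓb := Gamma_pos_of_pos (by linarith : 0 < x + b)
  simp only [Pi.div_apply, gammaShiftRatio, rpow_sub hx]
  field_simp
end
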